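/- arXiv:1512.05672 — 4 statements merged into one kernel-verified Lean document; each statement's English description precedes it below -/
import Mathlib

section
/- Let R → S be a homomorphism of Noetherian rings such that S is flat as an R-module, and let E be an R-module. If the set of associated primes Ass_R(E) is finite, then the set of associated primes Ass_S(E ⊗_R S) is also finite. -/
/-!
Let `P ∈ Ass_S (S ⊗ E)` and `p = P ∩ R`. As `p` is finitely generated and `S` is flat, the
elements of `S ⊗ E` killed by `p` form `S ⊗ (0 :_E p)`; as every element of a tensor product
comes from a finitely generated submodule, `P ∈ Ass_S (S ⊗ F)` for some finitely generated
`F ⊆ E` killed by `p`. Every `t ∈ Ann F` kills `S ⊗ F`, hence lies in `P`, so `Ann F = p`: thus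
`p` is a minimal prime of `Supp F`, hence associated to `F ⊆ E`. Along a prime filtration of `F`,
whose factors `R/q` all have `q ⊇ p`, flatness puts `P` into `Ass_S (S ⊗ R/q)` for one factor,
and the same annihilator argument forces `q = p`. So `Ass_S (S ⊗ E)` lies in the finite union of
the finite sets `Ass_S (S ⊗ R/p)`, `p ∈ Ass_R E`.
-/

universe u v w

open LinearMap Submodule TensorProduct

section

variable {R S M : Type*} [CommRing R] [CommRing S] [Algebra R S] [AddCommGroup M] [Module R M]

theorem annihilator_le_comap_of_isAssociatedPrime_tensor {P : Ideal S}
    (h : IsAssociatedPrime P (S ⊗[R] M)) :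
    Module.annihilator R M ≤ P.comap (algebraMap R S) := by
  intro t ht
  have hkill : t ∈ Module.annihilator R (S ⊗[R] M) := by
    rw [Module.mem_annihilator] at ht ⊢
    intro x
    induction x with
    | zero => rw [smul_zero]
    | tmul s m => rw [smul_tmul', smul_tmul, ht, tmul_zero]
    | add x y hx hy => rw [smul_add, hx, hy, add_zero]
  rw [← Module.comap_annihilator (R := S)] at hkill
  exact Ideal.comap_mono (annihilator_top.symm.trans_le h.annihilator_le) hkill

theorem Submodule.colon_bot_singleton_apply_of_injective {M' : Type*} [AddCommGroup M']
    [Module R M'] {f : M →ₗ[R] M'} (hf : Function.Injective f) (x : M) :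
    (⊥ : Submodule R M').colon {f x} = (⊥ : Submodule R M).colon {x} := by
  ext r
  simp only [mem_colon_singleton, mem_bot, ← map_smul, map_eq_zero_iff f hf]

theorem mem_associatedPrimes_of_annihilator_eq [IsNoetherianRing R] [Module.Finite R M]
    {p : Ideal R} [p.IsPrime] (h : Module.annihilator R M = p) : p ∈ associatedPrimes R M := by
  apply Module.associatedPrimes.minimalPrimes_annihilator_subset_associatedPrimes R M
  rw [h, Ideal.minimalPrimes_eq_subsingleton_self]
  rfl

variable [Module.Flat R S]

theorem Module.Flat.associatedPrimes_tensor_subset_union {N₁ N₂ N₃ : Type*}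
    [AddCommGroup N₁] [Module R N₁] [AddCommGroup N₂] [Module R N₂]
    [AddCommGroup N₃] [Module R N₃]
    {f : N₁ →ₗ[R] N₂} {g : N₂ →ₗ[R] N₃} (hf : Function.Injective f) (hfg : Function.Exact f g) :
    associatedPrimes S (S ⊗[R] N₂) ⊆
      associatedPrimes S (S ⊗[R] N₁) ∪ associatedPrimes S (S ⊗[R] N₃) := by
  apply associatedPrimes.subset_union_of_exact (f := f.baseChange S) (g := g.baseChange S)
  · rw [baseChange_eq_ltensor]
    exact Module.Flat.lTensor_preserves_injective_linearMap f hf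
  · rw [baseChange_eq_ltensor, baseChange_eq_ltensor]
    exact Module.Flat.lTensor_exact S hfg

theorem Module.Flat.mem_range_lTensor_torsionBySet (s : Finset R) {z : S ⊗[R] M}
    (hz : ∀ a ∈ s, a • z = 0) :
    z ∈ range ((torsionBySet R M s).subtype.lTensor S) := by
  classical
  let g : M →ₗ[R] (s → M) := LinearMap.pi fun a ↦ (a : R) • LinearMap.id
  have hker : ker g = torsionBySet R M s := by
    ext x
    simp [g, funext_iff, mem_torsionBySet_iff]
  have hexact := Module.Flat.lTensor_exact S (LinearMap.exact_subtype_ker_map g)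
  rw [hker] at hexact
  refine (hexact z).mp ((TensorProduct.piRight R R S fun _ : s ↦ M).map_eq_zero_iff.mp ?_)
  have : (piRight R R S fun _ : s ↦ M).toLinearMap ∘ₗ g.lTensor S =
      LinearMap.pi fun a : s ↦ (a : R) • LinearMap.id := by
    ext x m a
    simp [g]
  rw [← LinearEquiv.coe_toLinearMap, ← LinearMap.comp_apply, this]
  ext a
  exact hz a a.2

theorem IsAssociatedPrime.of_mem_range_lTensor {N : Submodule R M} {P : Ideal S} {z : S ⊗[R] M}
    (hP : P.IsPrime) (hz : P = ((⊥ : Submodule S (S ⊗[R] M)).colon {z}).radical)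
    (hzN : z ∈ range (N.subtype.lTensor S)) : IsAssociatedPrime P (S ⊗[R] N) := by
  obtain ⟨w, rfl⟩ := hzN
  have hinj : Function.Injective (N.subtype.baseChange S) :=
    Module.Flat.lTensor_preserves_injective_linearMap _ N.injective_subtype
  exact ⟨hP, w, by rw [hz, ← colon_bot_singleton_apply_of_injective hinj]; rfl⟩

theorem IsAssociatedPrime.exists_finite_tensor {P : Ideal S}
    (h : IsAssociatedPrime P (S ⊗[R] M)) :
    ∃ F : Submodule R M, Module.Finite R F ∧ IsAssociatedPrime P (S ⊗[R] F) := by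
  obtain ⟨hP, z, hz⟩ := h
  obtain ⟨F, hF, hzF⟩ := exists_finite_submodule_right_of_setFinite {z} (Set.finite_singleton z)
  exact ⟨F, hF, .of_mem_range_lTensor hP hz (hzF rfl)⟩

theorem IsAssociatedPrime.tensor_torsionBySet_comap [IsNoetherianRing R] [IsNoetherianRing S]
    {P : Ideal S} (h : IsAssociatedPrime P (S ⊗[R] M)) :
    IsAssociatedPrime P (S ⊗[R] torsionBySet R M (P.comap (algebraMap R S))) := by
  obtain ⟨hP, z, hz⟩ := isAssociatedPrime_iff.mp h
  obtain ⟨s, hs⟩ := IsNoetherian.noetherian (P.comap (algebraMap R S))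
  rw [← hs, ← torsionBySet_eq_torsionBySet_span]
  refine .of_mem_range_lTensor hP (by rw [← hz, hP.radical])
    (Module.Flat.mem_range_lTensor_torsionBySet s fun a ha ↦ ?_)
  have : algebraMap R S a ∈ P := (hs ▸ subset_span ha : a ∈ P.comap (algebraMap R S))
  rwa [hz, mem_colon_singleton, mem_bot, algebraMap_smul] at this

theorem IsAssociatedPrime.tensor_quotient_comap [IsNoetherianRing R] [Module.Finite R M]
    {P : Ideal S} (hP : P.comap (algebraMap R S) ≤ Module.annihilator R M)
    (h : IsAssociatedPrime P (S ⊗[R] M)) :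
    IsAssociatedPrime P (S ⊗[R] (R ⧸ P.comap (algebraMap R S))) := by
  induction ‹Module.Finite R M›
    using IsNoetherianRing.induction_on_isQuotientEquivQuotientPrime R with
  | subsingleton N => exact absurd h not_isAssociatedPrime_of_subsingleton
  | quotient N q e =>
    have hann : Module.annihilator R N = q.asIdeal :=
      e.annihilator_eq.trans Ideal.annihilator_quotient
    have hq : q.asIdeal = P.comap (algebraMap R S) :=
      le_antisymm (hann ▸ annihilator_le_comap_of_isAssociatedPrime_tensor h) (hann ▸ hP)
    rw [← hq]
    exact (LinearEquiv.isAssociatedPrime_iff (e.baseChange R S _ _)).mp h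
  | exact N₁ N₂ N₃ f g hf hg hfg ih₁ ih₃ =>
    rcases Module.Flat.associatedPrimes_tensor_subset_union hf hfg h with h₁ | h₃
    · exact ih₁ (hP.trans (f.annihilator_le_of_injective hf)) h₁
    · exact ih₃ (hP.trans (g.annihilator_le_of_surjective hg)) h₃

theorem associatedPrimes_tensor_subset_biUnion [IsNoetherianRing R] [IsNoetherianRing S] :
    associatedPrimes S (S ⊗[R] M) ⊆
      ⋃ p ∈ associatedPrimes R M, associatedPrimes S (S ⊗[R] (R ⧸ p)) := by
  intro P h
  set p := P.comap (algebraMap R S)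
  let T := torsionBySet R M p
  obtain ⟨F, hF, hPF⟩ := (IsAssociatedPrime.tensor_torsionBySet_comap h).exists_finite_tensor
  have hpF : p ≤ Module.annihilator R F := fun a ha ↦
    Module.mem_annihilator.mpr fun x ↦ Subtype.ext <| Subtype.ext <|
      (mem_torsionBySet_iff _ _).mp x.1.2 ⟨a, ha⟩
  have hann : Module.annihilator R F = p :=
    le_antisymm (annihilator_le_comap_of_isAssociatedPrime_tensor hPF) hpF
  have : P.IsPrime := h.isPrime
  have hpM : p ∈ associatedPrimes R M :=
    associatedPrimes.subset_of_injective (f := T.subtype ∘ₗ F.subtype)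
      (T.injective_subtype.comp F.injective_subtype) (mem_associatedPrimes_of_annihilator_eq hann)
  exact Set.mem_biUnion hpM (hPF.tensor_quotient_comap hpF)

end

theorem flat_associatedPrimes_finite_of_finite
    (R : Type u) (S : Type v) [CommRing R] [CommRing S]
    [IsNoetherianRing R] [IsNoetherianRing S] [Algebra R S] [Module.Flat R S]
    (E : Type w) [AddCommGroup E] [Module R E]
    (h : (associatedPrimes R E).Finite) :
    (associatedPrimes S (TensorProduct R S E)).Finite :=
  (h.biUnion fun _ _ ↦ associatedPrimes.finite S _).subset associatedPrimes_tensor_subset_biUnion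
end

section
/- Let R → S be a homomorphism of Noetherian rings such that S is flat as an R-module, and let E be an R-module. If Ass_S(E ⊗_R S) is finite and only finitely many primes p ∈ Ass_R(E) satisfy pS = S (i.e., pS is not a proper ideal of S), then Ass_R(E) is finite. -/
/-!
If `p ∈ Ass_R E` and `pS ≠ S`, then `R/p ↪ E` stays injective after the flat base change, and
`S ⊗_R R/p ≅ S/pS` is nonzero, so it has an associated prime `q`, which is then in
`Ass_S (S ⊗_R E)`. Flatness makes every `r ∉ p` a nonzerodivisor on `S ⊗_R R/p`, while `p` kills it,
so `q ∩ R = p`. Hence `Ass_R E` is covered by the finitely many primes with `pS = S` and the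
contractions of the finitely many primes of `Ass_S (S ⊗_R E)`.
-/

universe u v w

open TensorProduct

theorem Ideal.IsPrime.isSMulRegular_quotient {R : Type*} [CommRing R] {p : Ideal R}
    (hp : p.IsPrime) {r : R} (hr : r ∉ p) : IsSMulRegular (R ⧸ p) r :=
  (isSMulRegular_quotient_iff_mem_of_smul_mem p r).mpr fun _ h => (hp.mem_or_mem h).resolve_left hr

section FlatBaseChange

variable {R : Type u} {S : Type v} [CommRing R] [CommRing S] [Algebra R S] [Module.Flat R S]

theorem comap_eq_of_mem_associatedPrimes_tensor_quotient [IsNoetherianRing S]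
    {p : Ideal R} [hp : p.IsPrime] {q : Ideal S}
    (hq : q ∈ associatedPrimes S (S ⊗[R] (R ⧸ p))) :
    q.comap (algebraMap R S) = p := by
  ext r
  rw [Ideal.mem_comap]
  constructor
  · intro hrq
    by_contra hr
    have hreg : IsSMulRegular (S ⊗[R] (R ⧸ p)) (algebraMap R S r) := by
      rw [isSMulRegular_algebraMap_iff]
      exact (hp.isSMulRegular_quotient hr).lTensor S
    have hzd := biUnion_associatedPrimes_eq_compl_regular S (S ⊗[R] (R ⧸ p))
    exact (Set.ext_iff.mp hzd _).mp (Set.mem_biUnion hq hrq) hreg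
  · intro hr
    apply hq.annihilator_le
    rw [Submodule.annihilator_top, Module.mem_annihilator]
    intro x
    rw [algebraMap_smul]
    induction x using TensorProduct.induction_on with
    | zero => exact smul_zero r
    | tmul s a =>
      rw [← tmul_smul, Algebra.smul_def, Ideal.Quotient.algebraMap_eq,
        Ideal.Quotient.eq_zero_iff_mem.mpr hr, zero_mul, tmul_zero]
    | add x y hx hy => rw [smul_add, hx, hy, add_zero]

variable [IsNoetherianRing R] [IsNoetherianRing S] {E : Type w} [AddCommGroup E] [Module R E]

theorem mem_comap_image_associatedPrimes_tensor {p : Ideal R} (hp : p ∈ associatedPrimes R E)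
    (hpS : p.map (algebraMap R S) ≠ ⊤) :
    p ∈ Ideal.comap (algebraMap R S) '' associatedPrimes S (S ⊗[R] E) := by
  obtain ⟨_, f, hf⟩ := (isAssociatedPrime_iff_exists_injective_linearMap p E).mp hp
  have : Nontrivial (S ⧸ p.map (algebraMap R S)) := Ideal.Quotient.nontrivial_iff.mpr hpS
  have : Nontrivial (S ⊗[R] (R ⧸ p)) :=
    (Algebra.TensorProduct.quotIdealMapEquivTensorQuot S p).symm.toEquiv.nontrivial
  obtain ⟨q, hq⟩ := associatedPrimes.nonempty S (S ⊗[R] (R ⧸ p))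
  have hinj : Function.Injective (f.baseChange S) := by
    rw [LinearMap.baseChange_eq_ltensor]
    exact Module.Flat.lTensor_preserves_injective_linearMap f hf
  exact ⟨q, associatedPrimes.subset_of_injective hinj hq,
    comap_eq_of_mem_associatedPrimes_tensor_quotient hq⟩

theorem associatedPrimes_subset_union_comap_image_tensor :
    associatedPrimes R E ⊆ {p ∈ associatedPrimes R E | p.map (algebraMap R S) = ⊤} ∪
      Ideal.comap (algebraMap R S) '' associatedPrimes S (S ⊗[R] E) := fun p hp =>
  (em (p.map (algebraMap R S) = ⊤)).imp (fun hpS => ⟨hp, hpS⟩)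
    (mem_comap_image_associatedPrimes_tensor hp)

end FlatBaseChange

theorem flat_associatedPrimes_finite_of_extension_finite
    (R : Type u) (S : Type v) [CommRing R] [CommRing S]
    [IsNoetherianRing R] [IsNoetherianRing S] [Algebra R S] [Module.Flat R S]
    (E : Type w) [AddCommGroup E] [Module R E]
    (hfin : (associatedPrimes S (TensorProduct R S E)).Finite)
    (hext : {p ∈ associatedPrimes R E | Ideal.map (algebraMap R S) p = ⊤}.Finite) :
    (associatedPrimes R E).Finite :=
  (hext.union (hfin.image _)).subset associatedPrimes_subset_union_comap_image_tensor
end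

section
/- Let R be a Noetherian ring and M an R-module. Suppose that Ass_R(M_f) is finite for every non-unit f ∈ R, where M_f denotes the localization of M at the powers of f. Then Ass_R(M) is finite. -/
universe u v

/-!
Noetherian induction on the ideal `I`, for the set of associated primes of `M` containing `I`.
If some non-unit `g` lies outside `I`, an associated prime containing `I` either contains
`I ⊔ (g)`, and there are finitely many of those by induction, or avoids `g`, and then it is an
associated prime of `M_g`. Otherwise every element outside `I` is a unit, so `I` is the only
prime containing `I`.
-/

open Submodule

theorem IsAssociatedPrime.localizedModule {R : Type*} [CommSemiring R] {M : Type*}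
    [AddCommMonoid M] [Module R M] {S : Submonoid R} {p : Ideal R}
    (hp : IsAssociatedPrime p M) (hS : Disjoint (S : Set R) p) :
    IsAssociatedPrime p (LocalizedModule S M) := by
  obtain ⟨hprime, x, hx⟩ := hp
  have mem_iff (r : R) : r ∈ p ↔ ∃ n : ℕ, r ^ n • x = 0 := by
    simp only [hx, Ideal.mem_radical_iff, mem_colon_singleton, mem_bot]
  refine ⟨hprime, LocalizedModule.mk x 1, Ideal.ext fun r => ?_⟩
  simp only [Ideal.mem_radical_iff, mem_colon_singleton, mem_bot, LocalizedModule.smul'_mk,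
    ← LocalizedModule.zero_mk (1 : S), LocalizedModule.mk_eq, one_smul, smul_zero]
  constructor
  · intro hr
    obtain ⟨n, hn⟩ := (mem_iff r).mp hr
    exact ⟨n, 1, by rw [hn, smul_zero]⟩
  · rintro ⟨n, s, hs⟩
    have hsr : (s : R) * r ^ n ∈ p :=
      (mem_iff _).mpr ⟨1, by rwa [pow_one, mul_smul, ← Submonoid.smul_def]⟩
    have hs : (s : R) ∉ p := Set.disjoint_left.mp hS s.2
    exact hprime.mem_of_pow_mem n ((hprime.mem_or_mem hsr).resolve_left hs)

theorem associatedPrimes_subset_union_associatedPrimes_localizedModule_powers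
    {R : Type*} [CommSemiring R] (M : Type*) [AddCommMonoid M] [Module R M] (g : R) :
    associatedPrimes R M ⊆
      {p | g ∈ p} ∪ associatedPrimes R (LocalizedModule (Submonoid.powers g) M) := by
  intro p hp
  by_cases hg : g ∈ p
  · exact Or.inl hg
  · refine Or.inr (IsAssociatedPrime.localizedModule hp ?_)
    have := hp.isPrime
    exact (Ideal.disjoint_powers_iff_notMem_of_isPrime g).mpr hg

theorem Ideal.eq_of_le_of_forall_isUnit {R : Type*} [CommSemiring R] {I p : Ideal R}
    [p.IsPrime] (hIp : I ≤ p) (hI : ∀ g ∉ I, IsUnit g) : p = I :=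
  le_antisymm (fun y hy => by_contra fun hyI => ‹p.IsPrime›.ne_top
    (Ideal.eq_top_of_isUnit_mem p hy (hI y hyI))) hIp

theorem associatedPrimes_above_finite_of_localizations_finite
    {R : Type*} [CommRing R] [IsNoetherianRing R] (M : Type*) [AddCommGroup M] [Module R M]
    (h : ∀ f : R, ¬IsUnit f →
      (associatedPrimes R (LocalizedModule (Submonoid.powers f) M)).Finite) (I : Ideal R) :
    {p ∈ associatedPrimes R M | I ≤ p}.Finite := by
  induction I using WellFoundedGT.induction with
  | _ I ih =>
    by_cases hI : ∀ g ∉ I, IsUnit g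
    · refine (Set.finite_singleton I).subset fun p ⟨hp, hIp⟩ => ?_
      have := hp.isPrime
      exact Ideal.eq_of_le_of_forall_isUnit hIp hI
    push Not at hI
    obtain ⟨g, hgI, hg⟩ := hI
    have hlt : I < I ⊔ Ideal.span {g} :=
      left_lt_sup.mpr fun hle => hgI (hle (Ideal.mem_span_singleton_self g))
    refine ((ih _ hlt).union (h g hg)).subset fun p ⟨hp, hIp⟩ => ?_
    rcases associatedPrimes_subset_union_associatedPrimes_localizedModule_powers M g hp with
      hgp | hp_loc
    · exact Or.inl ⟨hp, sup_le hIp ((Ideal.span_singleton_le_iff_mem p).mpr hgp)⟩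
    · exact Or.inr hp_loc

theorem associatedPrimes_finite_of_localizations_finite
    (R : Type u) [CommRing R] [IsNoetherianRing R]
    (M : Type v) [AddCommGroup M] [Module R M]
    (h : ∀ f : R, ¬IsUnit f →
      (associatedPrimes R (LocalizedModule (Submonoid.powers f) M)).Finite) :
    (associatedPrimes R M).Finite := by
  simpa using associatedPrimes_above_finite_of_localizations_finite M h ⊥
end

section
/- Let (R, m) be a Noetherian local ring and let R → S be a cyclically pure ring extension of Noetherian rings. Let R̂ denote the m-adic completion of R. Then the induced map R̂ → S ⊗_R R̂ is also cyclically pure, i.e., for every ideal I ⊆ R̂ one has I·(S ⊗_R R̂) ∩ R̂ = I. -/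
/-!
Let `x ∈ R̂` lie in `I·(R̂ ⊗ S)`; only finitely many elements `g` of `I` are involved. For each `n`,
let `J ⊇ mⁿ` be the preimage in `R` of the image of `(g)` in `R/mⁿ`. The map `R̂ ⊗ S → S/JS` built
from `R̂ → R/mⁿ → R/J` kills `g`, so it kills `x`, and cyclic purity of `R → S` at `J` puts the
image of `x` in `R/mⁿ` into the image of `(g)`. It remains to see that the finitely generated
ideal `(g)` of `R̂` is closed: the levels `R/mⁿ` are Artinian, so the fibres of
`(R/mⁿ)^g → R/mⁿ` over the components of `x` form a Mittag-Leffler system of cosets, whose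
compatible section gives the coefficients of `x` in terms of `g`.
-/

universe u

open TensorProduct

theorem Ideal.exists_finset_subset_mem_map_span {A B : Type*} [Semiring A] [Semiring B] {F : Type*}
    [FunLike F A B] [RingHomClass F A B] (f : F) {I : Ideal A} {y : B} (hy : y ∈ I.map f) :
    ∃ s : Finset A, (s : Set A) ⊆ I ∧ y ∈ (Ideal.span (s : Set A)).map f := by
  classical
  obtain ⟨t, ht, hyt⟩ := Submodule.mem_span_finite_of_mem_span hy
  obtain ⟨s, hs, rfl⟩ := Finset.subset_set_image_iff.1 ht
  exact ⟨s, hs, by rwa [Ideal.map_span, ← Finset.coe_image]⟩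

theorem isArtinianRing_quotient_of_pow_le {R : Type*} [CommRing R] [IsNoetherianRing R]
    {m J : Ideal R} [m.IsMaximal] {n : ℕ} (h : m ^ n ≤ J) : IsArtinianRing (R ⧸ J) := by
  have : Ring.KrullDimLE 0 (R ⧸ J) := Ring.krullDimLE_zero_iff.mpr fun P hP => by
    have hJP : J ≤ P.comap (Ideal.Quotient.mk J) := by
      intro r hr
      simp [Ideal.Quotient.eq_zero_iff_mem.2 hr, P.zero_mem]
    have hm : P.comap (Ideal.Quotient.mk J) = m :=
      ((‹m.IsMaximal›).eq_of_le (hP.comap _).ne_top ((hP.comap _).le_of_pow_le (h.trans hJP))).symm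
    have : (P.comap (Ideal.Quotient.mk J)).IsMaximal := hm ▸ ‹m.IsMaximal›
    exact Ideal.isMaximal_of_isIntegral_of_isMaximal_comap (R := R) P this
  exact IsNoetherianRing.isArtinianRing_of_krullDimLE_zero

section MittagLeffler

variable {X : ℕ → Type*} (π : ∀ {k n : ℕ}, k ≤ n → X n → X k)

theorem exists_compatible_mem_of_mittagLeffler
    (hid : ∀ n (x : X n), π le_rfl x = x)
    (hcomp : ∀ {i j k : ℕ} (hij : i ≤ j) (hjk : j ≤ k) (x : X k),
      π hij (π hjk x) = π (hij.trans hjk) x)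
    (F : ∀ n, Set (X n)) (hF : ∀ n, (F n).Nonempty)
    (hmaps : ∀ {k n : ℕ} (h : k ≤ n), Set.MapsTo (π h) (F n) (F k))
    (hML : ∀ n, ∃ N, ∃ hN : n ≤ N, ∀ j (hj : N ≤ j), π hN '' F N ⊆ π (hN.trans hj) '' F j) :
    ∃ x : ∀ n, X n, (∀ n, x n ∈ F n) ∧ ∀ {k n : ℕ} (h : k ≤ n), π h (x n) = x k := by
  choose N hN hML using hML
  -- `E n` is the eventual image of the system in `X n`
  set E : ∀ n, Set (X n) := fun n => π (hN n) '' F (N n)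
  have hEF : ∀ n, E n ⊆ F n := fun n => (hmaps (hN n)).image_subset
  have hE_lift : ∀ n, ∀ y ∈ E n, ∃ z ∈ E (n + 1), π n.le_succ z = y := by
    intro n y hy
    -- lift `y` to a level beyond both `N n` and `N (n + 1)`, then project to level `n + 1`
    obtain ⟨a, ha, rfl⟩ := hML n (max (N n) (N (n + 1))) (le_max_left _ _) hy
    exact ⟨_, ⟨_, hmaps (le_max_right _ _) ha, hcomp _ _ a⟩, hcomp _ _ a⟩
  choose lift hlift_mem hlift using hE_lift
  let x : ∀ n, E n := fun n => Nat.rec (motive := fun n => E n)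
    ⟨_, ((hF (N 0)).image (π (hN 0))).some_mem⟩ (fun n y => ⟨lift n y y.2, hlift_mem n y y.2⟩) n
  have hx : ∀ n, π n.le_succ (x (n + 1)).1 = x n := fun n => hlift n _ _
  refine ⟨fun n => x n, fun n => hEF n (x n).2, fun {k n} h => ?_⟩
  induction n, h using Nat.le_induction with
  | base => exact hid k _
  | succ n hkn ih =>
    dsimp only at ih ⊢
    rw [← ih, ← hx n, hcomp]

end MittagLeffler

section Artinian

variable {R : Type*} [Ring R] {A B : ℕ → Type*} [∀ n, AddCommGroup (A n)] [∀ n, Module R (A n)]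
  [∀ n, IsArtinian R (A n)] [∀ n, AddCommGroup (B n)] [∀ n, Module R (B n)]

theorem exists_compatible_preimage_of_isArtinian
    (πA : ∀ {k n : ℕ}, k ≤ n → A n →ₗ[R] A k) (πB : ∀ {k n : ℕ}, k ≤ n → B n →ₗ[R] B k)
    (hid : ∀ n (a : A n), πA le_rfl a = a)
    (hcomp : ∀ {i j k : ℕ} (hij : i ≤ j) (hjk : j ≤ k) (a : A k),
      πA hij (πA hjk a) = πA (hij.trans hjk) a)
    (ψ : ∀ n, A n →ₗ[R] B n) (hψ : ∀ {k n : ℕ} (h : k ≤ n) (a : A n), ψ k (πA h a) = πB h (ψ n a))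
    (y : ∀ n, B n) (hy : ∀ {k n : ℕ} (h : k ≤ n), πB h (y n) = y k)
    (hrange : ∀ n, y n ∈ LinearMap.range (ψ n)) :
    ∃ a : ∀ n, A n, (∀ n, ψ n (a n) = y n) ∧ ∀ {k n : ℕ} (h : k ≤ n), πA h (a n) = a k := by
  refine exists_compatible_mem_of_mittagLeffler (fun h => πA h) hid hcomp (fun n => ψ n ⁻¹' {y n})
    hrange (fun h a (ha : ψ _ a = _) => ?_) fun n => ?_
  · change ψ _ (πA h a) = _
    rw [hψ, ha, hy]
  -- The images in `A n` of the kernels `ker ψ j` attain a minimum at some `N`; beyond `N` the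
  -- images of the fibres are cosets of that minimum, hence all equal.
  obtain ⟨_, ⟨N, hN, rfl⟩, hmin⟩ := IsArtinian.set_has_minimal
    {K | ∃ j, ∃ h : n ≤ j, K = (LinearMap.ker (ψ j)).map (πA h)} ⟨_, n, le_rfl, rfl⟩
  refine ⟨N, hN, fun j hj => ?_⟩
  have hker : (LinearMap.ker (ψ j)).map (πA (hN.trans hj)) = (LinearMap.ker (ψ N)).map (πA hN) := by
    refine eq_of_le_of_not_lt ?_ (hmin _ ⟨j, hN.trans hj, rfl⟩)
    rintro _ ⟨c, hc, rfl⟩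
    refine ⟨πA hj c, ?_, hcomp _ _ _⟩
    rw [SetLike.mem_coe, LinearMap.mem_ker, hψ, LinearMap.mem_ker.1 hc, map_zero]
  rintro _ ⟨b, hb : ψ N b = y N, rfl⟩
  obtain ⟨a, ha⟩ := hrange j
  have hdiff : πA hN (b - πA hj a) ∈ (LinearMap.ker (ψ N)).map (πA hN) := by
    refine Submodule.mem_map_of_mem ?_
    rw [LinearMap.mem_ker, map_sub, hψ, ha, hy, hb, sub_self]
  rw [← hker] at hdiff
  obtain ⟨c, hc, hca⟩ := hdiff
  refine ⟨a + c, ?_, ?_⟩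
  · change ψ j (a + c) = y j
    rw [map_add, ha, LinearMap.mem_ker.1 hc, add_zero]
  · rw [map_add, hca, map_sub, hcomp]
    abel

end Artinian

def RingHom.IsCyclicallyPure {A B : Type*} [CommRing A] [CommRing B] (f : A →+* B) : Prop :=
  ∀ I : Ideal A, (I.map f).comap f = I

namespace RingHom.IsCyclicallyPure

variable {R S : Type*} [CommRing R] [CommRing S] [Algebra R S]

theorem quotient_baseChange (hS : (algebraMap R S).IsCyclicallyPure) (L : Ideal R) :
    (algebraMap (R ⧸ L) ((R ⧸ L) ⊗[R] S)).IsCyclicallyPure := by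
  intro J
  refine le_antisymm (fun y hy => ?_) Ideal.le_comap_map
  obtain ⟨r, rfl⟩ := Ideal.Quotient.mk_surjective y
  set J' := J.comap (Ideal.Quotient.mk L)
  have hLJ' : L ≤ (J'.map (algebraMap R S)).comap (algebraMap R S) := by
    rw [hS]; exact fun l hl => by simp [J', Ideal.Quotient.eq_zero_iff_mem.2 hl]
  let P : (R ⧸ L) ⊗[R] S →ₐ[R] S ⧸ J'.map (algebraMap R S) :=
    Algebra.TensorProduct.productMap (Ideal.quotientMapₐ _ (Algebra.ofId R S) hLJ')
      (Ideal.Quotient.mkₐ R _)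
  have hP : ∀ r : R, P (algebraMap (R ⧸ L) _ (Ideal.Quotient.mk L r)) =
      Ideal.Quotient.mk _ (algebraMap R S r) := fun r => by
    simp [P, Algebra.TensorProduct.algebraMap_apply]; rfl
  have hPJ : J.map (algebraMap (R ⧸ L) ((R ⧸ L) ⊗[R] S)) ≤ RingHom.ker P := by
    rw [Ideal.map_le_iff_le_comap]
    intro z hz
    obtain ⟨r, rfl⟩ := Ideal.Quotient.mk_surjective z
    rw [Ideal.mem_comap, RingHom.mem_ker, hP, Ideal.Quotient.eq_zero_iff_mem]
    exact Ideal.mem_map_of_mem _ hz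
  show r ∈ J'
  rw [← hS J', Ideal.mem_comap, ← Ideal.Quotient.eq_zero_iff_mem, ← hP]
  exact hPJ hy

theorem mem_map_of_baseChange {A C : Type*} [CommRing A] [CommRing C] [Algebra R A] [Algebra R C]
    (hA : (algebraMap A (A ⊗[R] S)).IsCyclicallyPure) (e : C →ₐ[R] A) {I : Ideal C} {x : C}
    (hx : algebraMap C (C ⊗[R] S) x ∈ I.map (algebraMap C (C ⊗[R] S))) : e x ∈ I.map e := by
  have h : (I.map (algebraMap C (C ⊗[R] S))).map (Algebra.TensorProduct.map e (AlgHom.id R S)) ≤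
      (I.map e).map (algebraMap A (A ⊗[R] S)) := by
    rw [Ideal.map_le_iff_le_comap, Ideal.map_le_iff_le_comap]
    intro c hc
    simpa [Algebra.TensorProduct.algebraMap_apply] using
      Ideal.mem_map_of_mem (algebraMap A (A ⊗[R] S)) (Ideal.mem_map_of_mem e hc)
  rw [← hA (I.map e), Ideal.mem_comap]
  simpa [Algebra.TensorProduct.algebraMap_apply] using h (Ideal.mem_map_of_mem _ hx)

end RingHom.IsCyclicallyPure

namespace AdicCompletion

variable {R : Type*} [CommRing R] {I : Ideal R}

variable (I) in
/-- Unlike `evalₐ`, this lands in `R ⧸ I ^ n • ⊤`, where the components of `AdicCompletion I R`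
live. -/
noncomputable def valₐ (n : ℕ) : AdicCompletion I R →ₐ[R] R ⧸ (I ^ n • ⊤ : Ideal R) :=
  AlgHom.ofLinearMap (eval I R n) rfl fun _ _ => rfl

theorem mem_span_of_forall_val_mem_span [∀ n, IsArtinian R (R ⧸ (I ^ n • ⊤ : Ideal R))]
    {ι : Type*} [Fintype ι] (g : ι → AdicCompletion I R) (x : AdicCompletion I R)
    (hx : ∀ n, x.val n ∈ Ideal.span (Set.range fun i => (g i).val n)) :
    x ∈ Ideal.span (Set.range g) := by
  have hπ : ∀ {k n : ℕ} (h : k ≤ n) (a : ι → R ⧸ (I ^ n • ⊤ : Ideal R)) (i : ι),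
      (transitionMap I R h).compLeft ι a i = transitionMap I R h (a i) := fun _ _ _ => rfl
  let ψ : ∀ n, (ι → R ⧸ (I ^ n • ⊤ : Ideal R)) →ₗ[R] R ⧸ (I ^ n • ⊤ : Ideal R) := fun n =>
    ∑ i, LinearMap.mulRight R ((g i).val n) ∘ₗ LinearMap.proj i
  have hψ : ∀ n a, ψ n a = ∑ i, a i * (g i).val n := fun n a => by simp [ψ]
  obtain ⟨a, hax, ha⟩ := exists_compatible_preimage_of_isArtinian
    (fun h => (transitionMap I R h).compLeft ι) (fun h => transitionMap I R h)
    (fun n a => funext fun i => LinearMap.congr_fun (Submodule.mapQ_id _) (a i))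
    (fun hij hjk a => funext fun i => Submodule.factor_comp_apply
      (Submodule.pow_smul_top_le I R hjk) (Submodule.pow_smul_top_le I R hij) (a i))
    ψ (fun h a => by
      simp only [hψ, map_sum, transitionMap_map_mul, hπ, (g _).property h])
    x.val x.property
    (fun n => by simpa [hψ, ← Ideal.mem_span_range_iff_exists_fun] using hx n)
  rw [Ideal.mem_span_range_iff_exists_fun]
  refine ⟨fun i => ⟨fun n => a n i, fun h => congrFun (ha h) i⟩, AdicCompletion.ext fun n => ?_⟩
  rw [← hax n, hψ, val_sum_apply]
  rfl

end AdicCompletion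

theorem cyclicallyPure_adicCompletion_baseChange_general
    (R S : Type u) [CommRing R] [CommRing S] [IsLocalRing R]
    [IsNoetherianRing R] [Algebra R S]
    (hcp : ∀ I : Ideal R, (I.map (algebraMap R S)).comap (algebraMap R S) = I)
    (I : Ideal (AdicCompletion (IsLocalRing.maximalIdeal R) R)) :
    (I.map (algebraMap (AdicCompletion (IsLocalRing.maximalIdeal R) R)
          (TensorProduct R (AdicCompletion (IsLocalRing.maximalIdeal R) R) S))).comap
        (algebraMap (AdicCompletion (IsLocalRing.maximalIdeal R) R)
          (TensorProduct R (AdicCompletion (IsLocalRing.maximalIdeal R) R) S)) = I := by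
  set m := IsLocalRing.maximalIdeal R
  refine le_antisymm (fun x hx => ?_) Ideal.le_comap_map
  obtain ⟨s, hsI, hxs⟩ := Ideal.exists_finset_subset_mem_map_span _ hx
  have : ∀ n, IsArtinian R (R ⧸ (m ^ n • ⊤ : Ideal R)) := fun n =>
    have := isArtinianRing_quotient_of_pow_le (m := m) (n := n) (J := m ^ n • ⊤) (by simp)
    isArtinian_of_surjective_algebraMap (R := R ⧸ (m ^ n • ⊤ : Ideal R)) Ideal.Quotient.mk_surjective
  suffices x ∈ Ideal.span (Set.range fun i : s => i.1) from
    Ideal.span_le.2 (by simpa using hsI) this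
  refine AdicCompletion.mem_span_of_forall_val_mem_span _ x fun n => ?_
  have := ((RingHom.IsCyclicallyPure.quotient_baseChange hcp (m ^ n • ⊤)).mem_map_of_baseChange
    (AdicCompletion.valₐ m n) hxs)
  rwa [Ideal.map_span, Set.image_eq_range] at this

theorem cyclicallyPure_adicCompletion_baseChange
    (R S : Type u) [CommRing R] [CommRing S] [IsLocalRing R]
    [IsNoetherianRing R] [IsNoetherianRing S] [Algebra R S]
    (hinj : Function.Injective (algebraMap R S))
    (hcp : ∀ I : Ideal R, (I.map (algebraMap R S)).comap (algebraMap R S) = I)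
    (I : Ideal (AdicCompletion (IsLocalRing.maximalIdeal R) R)) :
    (I.map (algebraMap (AdicCompletion (IsLocalRing.maximalIdeal R) R)
          (TensorProduct R (AdicCompletion (IsLocalRing.maximalIdeal R) R) S))).comap
        (algebraMap (AdicCompletion (IsLocalRing.maximalIdeal R) R)
          (TensorProduct R (AdicCompletion (IsLocalRing.maximalIdeal R) R) S)) = I :=
  cyclicallyPure_adicCompletion_baseChange_general R S hcp I
end
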